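/- Let ξ₁ ∈ S₃ and ξ₂ ∈ S₁ be complex numbers, and let t ∈ [−1,1] be real. Then there exists k ∈ {−1, 0, 1} such that | |ξ₁−1|² + |ξ₂−i|² + i(t + 2k + 2·Im ξ₁ − 2·Re ξ₂) | ≤ 2. Hence the region Σ₇ is covered by the closed regions bounded by the Heisenberg sphere of radius √2 centered at ((1,i)ᵀ,0) together with its vertical translates by ±2. -/

import Mathlib

open Complex

/-- The closed triangle with vertices `i, i/2, (1+i)/2`. -/
def triS₁ : Set ℂ := {z : ℂ | 0 ≤ z.re ∧ 1/2 ≤ z.im ∧ z.re + z.im ≤ 1}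

/-- The closed triangle with vertices `0, 1, (1+i)/2`. -/
def triS₃ : Set ℂ := {z : ℂ | 0 ≤ z.im ∧ z.im ≤ z.re ∧ z.re + z.im ≤ 1}

/-!
On `S₃` we have `|ξ₁ - 1|² ≤ 1` and on `S₁` we have `|ξ₂ - i|² ≤ 1/2`, so the real part of the
Korányi gauge is at most `3/2`. Its imaginary part `t + 2 Im ξ₁ - 2 Re ξ₂ + 2k` lies in `[-2, 2] + 2k`,
so one of `k ∈ {-1, 0, 1}` brings it into `[-1, 1]`; then the gauge has modulus at most
`√((3/2)² + 1) ≤ 2`.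
-/

lemma sq_norm_sub_one_le_one_of_mem_triS₃ {ξ : ℂ} (hξ : ξ ∈ triS₃) : ‖ξ - 1‖ ^ 2 ≤ 1 := by
  obtain ⟨h_im, h_im_le_re, h_sum⟩ := hξ
  rw [Complex.sq_norm, Complex.normSq_apply]
  simp only [sub_re, one_re, sub_im, one_im, sub_zero]
  nlinarith

lemma sq_norm_sub_I_le_half_of_mem_triS₁ {ξ : ℂ} (hξ : ξ ∈ triS₁) : ‖ξ - I‖ ^ 2 ≤ 1 / 2 := by
  obtain ⟨h_re, h_im, h_sum⟩ := hξ
  rw [Complex.sq_norm, Complex.normSq_apply]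
  simp only [sub_re, I_re, sub_zero, sub_im, I_im]
  nlinarith

lemma exists_abs_add_two_mul_le_one {s : ℝ} (hs : |s| ≤ 3) :
    ∃ k : ℤ, (k = -1 ∨ k = 0 ∨ k = 1) ∧ |s + 2 * k| ≤ 1 := by
  obtain ⟨hs_lower, hs_upper⟩ := abs_le.1 hs
  rcases le_or_gt s (-1) with h_low | h_low
  · exact ⟨1, by norm_num, abs_le.2 ⟨by push_cast; linarith, by push_cast; linarith⟩⟩
  rcases le_or_gt 1 s with h_high | h_high
  · exact ⟨-1, by norm_num, abs_le.2 ⟨by push_cast; linarith, by push_cast; linarith⟩⟩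
  · exact ⟨0, by norm_num, abs_le.2 ⟨by push_cast; linarith, by push_cast; linarith⟩⟩

lemma norm_ofReal_add_I_mul_ofReal_le {x y r : ℝ} (hr : 0 ≤ r) (h : x ^ 2 + y ^ 2 ≤ r ^ 2) :
    ‖(x : ℂ) + I * y‖ ≤ r := by
  rw [mul_comm, Complex.norm_add_mul_I]
  exact (Real.sqrt_le_left hr).2 h

/-- The region `Σ₇` is covered by the closed regions bounded by the Heisenberg
sphere of radius `√2` centered at `((1,i)ᵀ,0)` together with its vertical
translates by `±2`. -/
theorem sigma_seven_covered
    (ξ₁ ξ₂ : ℂ) (hξ₁ : ξ₁ ∈ triS₃) (hξ₂ : ξ₂ ∈ triS₁)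
    (t : ℝ) (ht : -1 ≤ t ∧ t ≤ 1) :
    ∃ k : ℤ, (k = -1 ∨ k = 0 ∨ k = 1) ∧
      ‖(‖ξ₁ - 1‖ : ℂ) ^ 2 +
        (‖ξ₂ - Complex.I‖ : ℂ) ^ 2 +
        Complex.I * ((t + 2 * k + 2 * ξ₁.im - 2 * ξ₂.re : ℝ) : ℂ)‖ ≤ 2 := by
  have hs : |t + 2 * ξ₁.im - 2 * ξ₂.re| ≤ 3 := by
    obtain ⟨_, _, _⟩ := hξ₁
    obtain ⟨_, _, _⟩ := hξ₂
    exact abs_le.2 ⟨by linarith, by linarith⟩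
  obtain ⟨k, hk, h_im⟩ := exists_abs_add_two_mul_le_one hs
  refine ⟨k, hk, ?_⟩
  have h_re₁ := sq_norm_sub_one_le_one_of_mem_triS₃ hξ₁
  have h_re₂ := sq_norm_sub_I_le_half_of_mem_triS₁ hξ₂
  have h_im_sq : (t + 2 * k + 2 * ξ₁.im - 2 * ξ₂.re) ^ 2 ≤ 1 := by
    rw [sq_le_one_iff_abs_le_one,
      show t + 2 * k + 2 * ξ₁.im - 2 * ξ₂.re = t + 2 * ξ₁.im - 2 * ξ₂.re + 2 * k by ring]
    exact h_im
  have h_cast : (‖ξ₁ - 1‖ : ℂ) ^ 2 + (‖ξ₂ - I‖ : ℂ) ^ 2 =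
      ((‖ξ₁ - 1‖ ^ 2 + ‖ξ₂ - I‖ ^ 2 : ℝ) : ℂ) := by
    push_cast; rfl
  rw [h_cast]
  refine norm_ofReal_add_I_mul_ofReal_le zero_le_two ?_
  nlinarith [sq_nonneg ‖ξ₁ - 1‖, sq_nonneg ‖ξ₂ - I‖]
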